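/- arXiv:1901.00359 — 3 statements merged into one kernel-verified Lean document; each statement's English description precedes it below -/
import Mathlib

section
/- Fix an integer p ≥ 2 and f ∈ 𝓕, and let (κ_n) be a positive real sequence diverging to ∞. Then (κ_n φ_f(κ_n))^{p+1} · ẽ₂(κ_n) · f(κ_n)^{−2} · (∫_{-1}^{1} (1−s²)^{(p−3)/2} f(κ_n s) ds)² → 2^{p−4} (p−1) Γ((p−1)/2)² as n → ∞, where Γ is the Euler Gamma function. -/
open MeasureTheory Filter Asymptotics Real Set

/-- Logarithmic derivative `φ_f = f'/f`. -/
noncomputable def phiF (f : ℝ → ℝ) (κ : ℝ) : ℝ := deriv f κ / f κ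

/-- Membership in the class `𝓕` of angular functions. -/
structure MemF (f : ℝ → ℝ) : Prop where
  pos : ∀ x, 0 < f x
  monoNonpos : MonotoneOn f (Set.Iic (0:ℝ))
  strictMonoNonneg : StrictMonoOn f (Set.Ici (0:ℝ))
  diff : ∃ M > (0:ℝ), ∀ x ∈ Set.Ioi M, DifferentiableAt ℝ f x
  tendsto_top : Tendsto (fun κ => κ * phiF f κ) atTop atTop
  monoOn : ∃ M' > (0:ℝ), MonotoneOn (fun κ => κ * phiF f κ) (Set.Ioi M')
  littleO : ∀ ξ ζ : ℝ, -1 < ξ → -1 < ζ →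
    (fun κ => ∫ s in (-1:ℝ)..1, (1 - s) ^ ξ * (1 + s) ^ ζ *
        |f (κ * s) / f κ - Real.exp ((s - 1) * (κ * phiF f κ))|)
      =o[atTop] (fun κ => (κ * phiF f κ) ^ (-(ξ + 1)))

/-- The normalizing integral `∫_{-1}^1 (1-s²)^{(p-3)/2} f(κ s) ds`. -/
noncomputable def I0 (p : ℕ) (f : ℝ → ℝ) (κ : ℝ) : ℝ :=
  ∫ s in (-1:ℝ)..1, (1 - s ^ 2) ^ (((p:ℝ) - 3) / 2) * f (κ * s)

/-- The `ℓ`-th moment `e_ℓ(κ)` of the latitude cosine under `Rot_p(θ, κ, f)`. -/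
noncomputable def eMom (p : ℕ) (f : ℝ → ℝ) (ℓ : ℕ) (κ : ℝ) : ℝ :=
  (∫ s in (-1:ℝ)..1, s ^ ℓ * (1 - s ^ 2) ^ (((p:ℝ) - 3) / 2) * f (κ * s)) / I0 p f κ

/-- The variance `ẽ₂(κ) = e₂(κ) - e₁(κ)²`. -/
noncomputable def eTilde2 (p : ℕ) (f : ℝ → ℝ) (κ : ℝ) : ℝ :=
  eMom p f 2 κ - (eMom p f 1 κ) ^ 2

lemma measurable_of_mono (f : ℝ → ℝ) (h1 : MonotoneOn f (Set.Iic (0:ℝ)))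
    (h2 : StrictMonoOn f (Set.Ici (0:ℝ))) : Measurable f := by
  have m1 : Monotone (fun x => f (min x 0)) := fun x y hxy =>
    h1 (min_le_right x 0) (min_le_right y 0) (min_le_min hxy le_rfl)
  have m2 : Monotone (fun x => f (max x 0)) := fun x y hxy =>
    (h2.monotoneOn) (le_max_right x 0) (le_max_right y 0) (max_le_max hxy le_rfl)
  have : f = fun x => if x ≤ 0 then f (min x 0) else f (max x 0) := by
    funext x
    by_cases hx : x ≤ 0
    · rw [if_pos hx, min_eq_left hx]
    · rw [if_neg hx, max_eq_left (le_of_lt (lt_of_not_ge hx))]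
  rw [this]
  exact Measurable.ite measurableSet_Iic m1.measurable m2.measurable

lemma int_one_sub {ξ : ℝ} (hξ : -1 < ξ) :
    IntervalIntegrable (fun s : ℝ => (1-s)^ξ) volume 0 1 := by
  have := (intervalIntegral.intervalIntegrable_rpow' (a := 1) (b := 0) hξ).comp_sub_left 1
  simpa using this

lemma int_one_add {ζ : ℝ} (hζ : -1 < ζ) :
    IntervalIntegrable (fun s : ℝ => (1+s)^ζ) volume (-1) 0 := by
  have := (intervalIntegral.intervalIntegrable_rpow' (a := 0) (b := 1) hζ).comp_add_right 1
  simp only [zero_sub, sub_self] at this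
  convert this using 2 with x
  ring_nf

lemma weight_intInt {ξ ζ : ℝ} (hξ : -1 < ξ) (hζ : -1 < ζ) :
    IntervalIntegrable (fun s => (1-s)^ξ * (1+s)^ζ) volume (-1) 1 := by
  have h1 : IntervalIntegrable (fun s => (1-s)^ξ * (1+s)^ζ) volume (-1) 0 := by
    have hcont : ContinuousOn (fun s : ℝ => (1-s)^ξ) (Set.uIcc (-1:ℝ) 0) := by
      apply ContinuousOn.rpow_const (by fun_prop)
      intro x hx
      rw [Set.uIcc_of_le (by norm_num : (-1:ℝ) ≤ 0)] at hx
      left; intro h; have := sub_eq_zero.mp (by linarith : (1:ℝ) - x = 0); linarith [hx.2]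
    have := (int_one_add hζ).mul_continuousOn hcont
    convert this using 2 with x; ring
  have h2 : IntervalIntegrable (fun s => (1-s)^ξ * (1+s)^ζ) volume 0 1 := by
    have hcont : ContinuousOn (fun s : ℝ => (1+s)^ζ) (Set.uIcc (0:ℝ) 1) := by
      apply ContinuousOn.rpow_const (by fun_prop)
      intro x hx
      rw [Set.uIcc_of_le (by norm_num : (0:ℝ) ≤ 1)] at hx
      left; intro h; linarith [hx.1]
    exact (int_one_sub hξ).mul_continuousOn hcont
  exact h1.trans h2

lemma weighted_intInt {ξ ζ : ℝ} (hξ : -1 < ξ) (hζ : -1 < ζ) {g : ℝ → ℝ}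
    (hg : Measurable g) {C : ℝ} (hC : ∀ s ∈ Set.Icc (-1:ℝ) 1, |g s| ≤ C) :
    IntervalIntegrable (fun s => (1-s)^ξ * (1+s)^ζ * g s) volume (-1) 1 := by
  have hbd : IntervalIntegrable (fun s => (1-s)^ξ * (1+s)^ζ * C) volume (-1) 1 :=
    (weight_intInt hξ hζ).mul_const C
  rw [intervalIntegrable_iff_integrableOn_Ioc_of_le (by norm_num : (-1:ℝ) ≤ 1)] at hbd ⊢
  refine MeasureTheory.Integrable.mono' hbd ?_ ?_
  · exact ((by fun_prop : Measurable (fun s : ℝ => (1-s)^ξ * (1+s)^ζ * g s))).aestronglyMeasurable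
  · rw [MeasureTheory.ae_restrict_iff' measurableSet_Ioc]
    filter_upwards with s hs
    have h1 : (0:ℝ) ≤ (1-s)^ξ := Real.rpow_nonneg (by linarith [hs.2]) ξ
    have h2 : (0:ℝ) ≤ (1+s)^ζ := Real.rpow_nonneg (by linarith [hs.1]) ζ
    have hCs := hC s ⟨le_of_lt hs.1, hs.2⟩
    simp only [norm_mul, Real.norm_eq_abs, abs_of_nonneg h1, abs_of_nonneg h2]
    exact mul_le_mul_of_nonneg_left hCs (mul_nonneg h1 h2)

lemma watson_main {b c : ℝ} (hb : 0 < b) :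
    Tendsto (fun t : ℝ => ∫ v in (0:ℝ)..t, v^(b-1) * (2 - v/t)^c * Real.exp (-v))
      atTop (nhds (2^c * Real.Gamma b)) := by
  set μ := volume.restrict (Set.Ioi (0:ℝ)) with hμ
  set F : ℝ → ℝ → ℝ := fun t v => (Set.Ioc (0:ℝ) t).indicator
      (fun v => v^(b-1) * (2 - v/t)^c * Real.exp (-v)) v with hF
  have key : Tendsto (fun t => ∫ v, F t v ∂μ) atTop
      (nhds (∫ v, 2^c * (Real.exp (-v) * v^(b-1)) ∂μ)) := by
    apply MeasureTheory.tendsto_integral_filter_of_dominated_convergence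
      (fun v => max 1 (2^c) * (Real.exp (-v) * v^(b-1)))
    · filter_upwards with t
      apply Measurable.aestronglyMeasurable
      exact Measurable.indicator (by fun_prop) measurableSet_Ioc
    · filter_upwards [eventually_gt_atTop (0:ℝ)] with t ht
      rw [MeasureTheory.ae_restrict_iff' measurableSet_Ioi]
      filter_upwards with v hv
      have hv0 : (0:ℝ) < v := hv
      by_cases hmem : v ∈ Set.Ioc (0:ℝ) t
      case neg =>
        rw [hF]; simp only []; rw [Set.indicator_of_notMem hmem]
        simp only [norm_zero]
        positivity
      case pos =>
        rw [hF]; simp only []; rw [Set.indicator_of_mem hmem]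
        have hvt : v ≤ t := hmem.2
        have h1 : (1:ℝ) ≤ 2 - v/t := by
          have : v / t ≤ 1 := (div_le_one ht).mpr hvt
          linarith
        have h2 : (2:ℝ) - v/t ≤ 2 := by
          have : 0 < v / t := div_pos hv0 ht
          linarith
        have hbound : (2 - v/t)^c ≤ max 1 (2^c) := by
          rcases le_or_gt 0 c with hc | hc
          · exact le_max_of_le_right (Real.rpow_le_rpow (by linarith) h2 hc)
          · refine le_max_of_le_left ?_
            calc (2 - v/t)^c ≤ (1:ℝ)^c :=
                  Real.rpow_le_rpow_of_nonpos one_pos h1 hc.le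
              _ = 1 := Real.one_rpow c
        have hnn : 0 ≤ v^(b-1) * (2 - v/t)^c * Real.exp (-v) := by positivity
        rw [Real.norm_eq_abs, abs_of_nonneg hnn]
        calc v^(b-1) * (2 - v/t)^c * Real.exp (-v)
            ≤ v^(b-1) * max 1 (2^c) * Real.exp (-v) := by
              apply mul_le_mul_of_nonneg_right _ (Real.exp_nonneg _)
              exact mul_le_mul_of_nonneg_left hbound (Real.rpow_nonneg hv0.le _)
          _ = max 1 (2^c) * (Real.exp (-v) * v^(b-1)) := by ring
    · exact ((Real.GammaIntegral_convergent hb).const_mul _)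
    · rw [MeasureTheory.ae_restrict_iff' measurableSet_Ioi]
      filter_upwards with v hv
      have hv0 : (0:ℝ) < v := hv
      have hev : ∀ᶠ t in atTop, F t v = v^(b-1) * (2 - v/t)^c * Real.exp (-v) := by
        filter_upwards [eventually_ge_atTop v] with t htv
        rw [hF]; simp only []
        exact Set.indicator_of_mem (Set.mem_Ioc.mpr ⟨hv0, htv⟩) _
      have hlim : Tendsto (fun t : ℝ => v^(b-1) * (2 - v/t)^c * Real.exp (-v)) atTop
          (nhds (2^c * (Real.exp (-v) * v^(b-1)))) := by
        have h2 : Tendsto (fun t : ℝ => 2 - v/t) atTop (nhds 2) := by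
          have h0 : Tendsto (fun t : ℝ => v / t) atTop (nhds 0) :=
            Tendsto.div_atTop tendsto_const_nhds tendsto_id
          have := (tendsto_const_nhds (x := (2:ℝ)) (f := atTop)).sub h0
          simpa using this
        have hrpow : Tendsto (fun t : ℝ => (2 - v/t)^c) atTop (nhds (2^c)) := by
          exact ((Real.continuousAt_rpow_const 2 c (Or.inl two_ne_zero)).tendsto).comp h2
        have := (hrpow.const_mul (v^(b-1))).mul_const (Real.exp (-v))
        convert this using 2 <;> ring
      exact hlim.congr' (hev.mono fun t h => h.symm)
  have hint : ∫ v, 2^c * (Real.exp (-v) * v^(b-1)) ∂μ = 2^c * Real.Gamma b := by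
    rw [MeasureTheory.integral_const_mul, hμ, ← Real.Gamma_eq_integral hb]
  rw [hint] at key
  apply key.congr'
  filter_upwards [eventually_ge_atTop (0:ℝ)] with t ht
  rw [hF, hμ]
  simp only []
  rw [MeasureTheory.integral_indicator measurableSet_Ioc,
    MeasureTheory.Measure.restrict_restrict measurableSet_Ioc,
    Set.inter_eq_self_of_subset_left Set.Ioc_subset_Ioi_self,
    intervalIntegral.integral_of_le ht]

lemma watson_tail {b c : ℝ} (hb : 0 < b) (hc : -1 < c) :
    Tendsto (fun t : ℝ => ∫ v in t..(2*t), v^(b-1) * (2 - v/t)^c * Real.exp (-v))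
      atTop (nhds 0) := by
  have hc1 : (0:ℝ) < c + 1 := by linarith
  -- the squeezing bound
  set a : ℝ → ℝ := fun t => ((t^(b-1) + (2*t)^(b-1)) * Real.exp (-t) * t^(-c)) *
      (t^(c+1) / (c+1)) with ha
  have ha0 : Tendsto a atTop (nhds 0) := by
    have hmain : Tendsto (fun t : ℝ => ((1 + 2^(b-1)) / (c+1)) * (t^b * Real.exp (-t)))
        atTop (nhds 0) := by
      have h1 : Tendsto (fun t : ℝ => t^b * Real.exp (-t)) atTop (nhds 0) := by
        have := tendsto_rpow_mul_exp_neg_mul_atTop_nhds_zero b 1 one_pos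
        simpa using this
      simpa using h1.const_mul ((1 + 2^(b-1)) / (c+1))
    apply hmain.congr'
    filter_upwards [eventually_gt_atTop (0:ℝ)] with t ht
    have h2t : (2*t)^(b-1) = 2^(b-1) * t^(b-1) :=
      Real.mul_rpow (by norm_num) ht.le
    have htc : t^(-c) * t^(c+1) = t := by
      rw [← Real.rpow_add ht]
      simp
    have htb : t^(b-1) * t = t^b := by
      rw [← Real.rpow_add_one ht.ne' (b-1)]; ring_nf
    calc ((1 + 2^(b-1)) / (c+1)) * (t^b * Real.exp (-t))
        = ((1+2^(b-1))/(c+1)) * ((t^(b-1) * t) * Real.exp (-t)) := by rw [htb]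
      _ = ((1+2^(b-1))/(c+1)) * ((t^(b-1) * (t^(-c) * t^(c+1))) * Real.exp (-t)) := by
          rw [htc]
      _ = a t := by simp only [ha]; rw [h2t]; ring
  apply squeeze_zero_norm' (a := fun t => |a t|) _ (by simpa using ha0.abs)
  filter_upwards [eventually_ge_atTop (1:ℝ)] with t ht1
  have ht : (0:ℝ) < t := lt_of_lt_of_le one_pos ht1
  set S : ℝ := t^(b-1) + (2*t)^(b-1) with hS
  set G : ℝ → ℝ := fun v => (S * Real.exp (-t) * t^(-c)) * (2*t - v)^c with hG
  have hGint : IntervalIntegrable G volume t (2*t) := by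
    have h0 := (intervalIntegral.intervalIntegrable_rpow' (a := t) (b := 0) hc).comp_sub_left (2*t)
    have e2 : 2*t - t = t := by ring
    rw [e2, sub_zero] at h0
    exact h0.const_mul _
  have hle : ∀ᵐ v ∂(volume.restrict (Set.uIoc t (2*t))),
      ‖v^(b-1) * (2 - v/t)^c * Real.exp (-v)‖ ≤ G v := by
    rw [Set.uIoc_of_le (by linarith : t ≤ 2*t)]
    rw [MeasureTheory.ae_restrict_iff' measurableSet_Ioc]
    filter_upwards with v hv
    have htv : t < v := hv.1
    have hv0 : (0:ℝ) < v := lt_trans ht htv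
    have hv2t : v ≤ 2*t := hv.2
    have h2tv : (0:ℝ) ≤ 2*t - v := by linarith
    have heq : (2 - v/t)^c = t^(-c) * (2*t - v)^c := by
      have : (2:ℝ) - v/t = (2*t - v)/t := by field_simp
      rw [this, Real.div_rpow h2tv ht.le, Real.rpow_neg ht.le]
      ring
    have hv1 : v^(b-1) ≤ S := by
      rcases le_or_gt 1 b with hb1 | hb1
      · calc v^(b-1) ≤ (2*t)^(b-1) :=
            Real.rpow_le_rpow hv0.le hv2t (by linarith)
          _ ≤ S := by
            have : (0:ℝ) ≤ t^(b-1) := Real.rpow_nonneg ht.le _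
            rw [hS]; linarith
      · calc v^(b-1) ≤ t^(b-1) :=
            Real.rpow_le_rpow_of_nonpos ht hv.1.le (by linarith)
          _ ≤ S := by
            have : (0:ℝ) ≤ (2*t)^(b-1) := Real.rpow_nonneg (by linarith) _
            rw [hS]; linarith
    have he : Real.exp (-v) ≤ Real.exp (-t) := Real.exp_le_exp.mpr (by linarith)
    have hnn : (0:ℝ) ≤ v^(b-1) * (2 - v/t)^c * Real.exp (-v) := by
      have : (0:ℝ) ≤ 2 - v/t := by
        rw [sub_nonneg, div_le_iff₀ ht]; linarith
      positivity
    rw [Real.norm_eq_abs, abs_of_nonneg hnn]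
    calc v^(b-1) * (2 - v/t)^c * Real.exp (-v)
        = (v^(b-1) * Real.exp (-v)) * (t^(-c) * (2*t - v)^c) := by rw [heq]; ring
      _ ≤ (S * Real.exp (-t)) * (t^(-c) * (2*t - v)^c) := by
          apply mul_le_mul_of_nonneg_right
          · exact mul_le_mul hv1 he (Real.exp_nonneg _) (le_trans (Real.rpow_nonneg hv0.le _) hv1)
          · exact mul_nonneg (Real.rpow_nonneg ht.le _) (Real.rpow_nonneg h2tv _)
      _ = G v := by rw [hG]; ring
  have hbound := intervalIntegral.norm_integral_le_abs_of_norm_le hle hGint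
  have hGval : ∫ v in t..(2*t), G v = a t := by
    rw [hG]
    rw [intervalIntegral.integral_const_mul]
    have hsub : ∫ v in t..(2*t), (2*t - v)^c = ∫ u in (0:ℝ)..t, u^c := by
      have := intervalIntegral.integral_comp_sub_left (a := t) (b := 2*t)
        (fun x : ℝ => x^c) (2*t)
      rw [this]
      have e1 : 2*t - 2*t = (0:ℝ) := by ring
      have e2 : 2*t - t = t := by ring
      rw [e1, e2]
    rw [hsub, integral_rpow (Or.inl hc), Real.zero_rpow (by linarith : c + 1 ≠ 0)]
    rw [ha, hS]
    ring
  rw [hGval] at hbound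
  exact hbound

lemma watson_sub {b c : ℝ} (t : ℝ) (ht : 0 < t) :
    ∫ s in (-1:ℝ)..1, (1-s)^(b-1) * (1+s)^c * Real.exp ((s-1)*t)
      = t^(-b) * ∫ v in (0:ℝ)..(2*t), v^(b-1) * (2 - v/t)^c * Real.exp (-v) := by
  set h : ℝ → ℝ := fun v => v^(b-1) * (2 - v/t)^c * Real.exp (-v) with hh
  set g : ℝ → ℝ := fun u => u^(b-1) * (2-u)^c * Real.exp (-(u*t)) with hg
  have step1 : ∫ s in (-1:ℝ)..1, (1-s)^(b-1) * (1+s)^c * Real.exp ((s-1)*t)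
      = ∫ u in (0:ℝ)..2, g u := by
    have e1 : (fun s : ℝ => (1-s)^(b-1) * (1+s)^c * Real.exp ((s-1)*t))
        = fun s => g (1 - s) := by
      funext s
      simp only [hg]
      rw [show (2 - (1 - s) : ℝ) = 1 + s by ring, show (-((1-s)*t) : ℝ) = (s-1)*t by ring]
    rw [e1, intervalIntegral.integral_comp_sub_left g 1]
    norm_num
  have step2 : ∫ u in (0:ℝ)..2, g u = ∫ u in (0:ℝ)..2, t^(-(b-1)) * h (t*u) := by
    apply intervalIntegral.integral_congr
    intro u hu
    rw [Set.uIcc_of_le (by norm_num : (0:ℝ) ≤ 2)] at hu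
    have hu0 : (0:ℝ) ≤ u := hu.1
    simp only [hg, hh]
    have e2 : (t*u)/t = u := by field_simp
    rw [e2, Real.mul_rpow ht.le hu0, Real.rpow_neg ht.le, mul_comm t u]
    have hne : t^(b-1) ≠ 0 := (Real.rpow_pos_of_pos ht _).ne'
    field_simp
  have step3 : ∫ u in (0:ℝ)..2, t^(-(b-1)) * h (t*u)
      = t^(-(b-1)) * (t⁻¹ * ∫ v in (0:ℝ)..(2*t), h v) := by
    rw [intervalIntegral.integral_const_mul]
    congr 1
    have := intervalIntegral.integral_comp_mul_left (a := 0) (b := 2) h ht.ne'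
    rw [this, smul_eq_mul, mul_zero, mul_comm t 2]
  rw [step1, step2, step3, ← mul_assoc]
  congr 1
  rw [show -b = -(b-1) + (-1) by ring, Real.rpow_add ht, Real.rpow_neg_one]

lemma watson {b c : ℝ} (hb : 0 < b) (hc : -1 < c) :
    Tendsto (fun t : ℝ => t^b * ∫ s in (-1:ℝ)..1, (1-s)^(b-1) * (1+s)^c * Real.exp ((s-1)*t))
      atTop (nhds (2^c * Real.Gamma b)) := by
  have hsum := (watson_main (c := c) hb).add (watson_tail (c := c) hb hc)
  rw [add_zero] at hsum
  apply hsum.congr'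
  filter_upwards [eventually_gt_atTop (0:ℝ)] with t ht
  set h : ℝ → ℝ := fun v => v^(b-1) * (2 - v/t)^c * Real.exp (-v) with hh
  have hint1 : IntervalIntegrable h volume 0 t := by
    have hbase : IntervalIntegrable (fun v : ℝ => v^(b-1)) volume 0 t :=
      intervalIntegral.intervalIntegrable_rpow' (by linarith)
    have hcont : ContinuousOn (fun v : ℝ => (2 - v/t)^c * Real.exp (-v)) (Set.uIcc 0 t) := by
      apply ContinuousOn.mul
      · apply ContinuousOn.rpow_const (by fun_prop)
        intro v hv
        rw [Set.uIcc_of_le ht.le] at hv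
        left
        have : v / t ≤ 1 := (div_le_one ht).mpr hv.2
        intro hzero; linarith [hzero]
      · fun_prop
    have := hbase.mul_continuousOn hcont
    apply this.congr
    intro v _
    simp only [hh]; ring
  have hint2 : IntervalIntegrable h volume t (2*t) := by
    have hbase : IntervalIntegrable (fun v : ℝ => (2*t - v)^c) volume t (2*t) := by
      have h0 := (intervalIntegral.intervalIntegrable_rpow' (a := t) (b := 0) hc).comp_sub_left (2*t)
      have e2 : 2*t - t = t := by ring
      rwa [e2, sub_zero] at h0
    have hcont : ContinuousOn (fun v : ℝ => t^(-c) * (v^(b-1) * Real.exp (-v)))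
        (Set.uIcc t (2*t)) := by
      apply ContinuousOn.mul continuousOn_const
      apply ContinuousOn.mul _ (by fun_prop)
      apply ContinuousOn.rpow_const (by fun_prop)
      intro v hv
      rw [Set.uIcc_of_le (by linarith : t ≤ 2*t)] at hv
      left; exact (lt_of_lt_of_le ht hv.1).ne'
    have hprod := hbase.mul_continuousOn hcont
    apply hprod.congr
    intro v hv
    rw [Set.uIoc_of_le (by linarith : t ≤ 2*t)] at hv
    have h2tv : (0:ℝ) ≤ 2*t - v := by linarith [hv.2]
    have heq : (2 - v/t)^c = t^(-c) * (2*t - v)^c := by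
      have e : (2:ℝ) - v/t = (2*t - v)/t := by field_simp
      rw [e, Real.div_rpow h2tv ht.le, Real.rpow_neg ht.le]
      ring
    simp only [hh]
    rw [heq]; ring
  have hsplit : (∫ v in (0:ℝ)..t, h v) + (∫ v in t..(2*t), h v) = ∫ v in (0:ℝ)..(2*t), h v :=
    intervalIntegral.integral_add_adjacent_intervals hint1 hint2
  rw [hsplit, watson_sub t ht, ← mul_assoc]
  rw [Real.rpow_neg ht.le, mul_inv_cancel₀ (Real.rpow_pos_of_pos ht b).ne', one_mul]

lemma f_le (f : ℝ → ℝ) (hf : MemF f) {κ : ℝ} (hκ : 0 ≤ κ) :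
    ∀ s ∈ Set.Icc (-1:ℝ) 1, f (κ*s) ≤ f κ := by
  intro s hs
  rcases le_or_gt 0 s with hs0 | hs0
  · apply hf.strictMonoNonneg.monotoneOn (Set.mem_Ici.mpr (mul_nonneg hκ hs0))
      (Set.mem_Ici.mpr hκ)
    calc κ * s ≤ κ * 1 := mul_le_mul_of_nonneg_left hs.2 hκ
      _ = κ := mul_one κ
  · have h1 : f (κ*s) ≤ f 0 := hf.monoNonpos
      (Set.mem_Iic.mpr (mul_nonpos_of_nonneg_of_nonpos hκ hs0.le))
      (Set.mem_Iic.mpr le_rfl) (mul_nonpos_of_nonneg_of_nonpos hκ hs0.le)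
    have h2 : f 0 ≤ f κ := hf.strictMonoNonneg.monotoneOn
      (Set.mem_Ici.mpr le_rfl) (Set.mem_Ici.mpr hκ) hκ
    linarith

lemma ratio_le_one (f : ℝ → ℝ) (hf : MemF f) {κ : ℝ} (hκ : 0 ≤ κ) :
    ∀ s ∈ Set.Icc (-1:ℝ) 1, |f (κ*s) / f κ| ≤ 1 := by
  intro s hs
  rw [abs_div, abs_of_pos (hf.pos _), abs_of_pos (hf.pos κ), div_le_one (hf.pos κ)]
  exact f_le f hf hκ s hs

lemma K_tendsto (f : ℝ → ℝ) (hf : MemF f) {ξ ζ : ℝ} (hξ : -1 < ξ) (hζ : -1 < ζ)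
    (κ : ℕ → ℝ) (hκpos : ∀ n, 0 < κ n) (hκtop : Tendsto κ atTop atTop) :
    Tendsto (fun n => (κ n * phiF f (κ n))^(ξ+1) *
        ∫ s in (-1:ℝ)..1, (1-s)^ξ * (1+s)^ζ * (f (κ n * s) / f (κ n)))
      atTop (nhds (2^ζ * Real.Gamma (ξ+1))) := by
  set t : ℝ → ℝ := fun x => x * phiF f x with htdef
  have htt : Tendsto (fun n => t (κ n)) atTop atTop := hf.tendsto_top.comp hκtop
  have hmeas := measurable_of_mono f hf.monoNonpos hf.strictMonoNonneg
  -- B part via Watson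
  have hB : Tendsto (fun n => (t (κ n))^(ξ+1) *
      ∫ s in (-1:ℝ)..1, (1-s)^ξ * (1+s)^ζ * Real.exp ((s-1) * t (κ n)))
      atTop (nhds (2^ζ * Real.Gamma (ξ+1))) := by
    have hw := watson (b := ξ+1) (c := ζ) (by linarith) hζ
    have hw' : Tendsto (fun τ : ℝ => τ^(ξ+1) *
        ∫ s in (-1:ℝ)..1, (1-s)^ξ * (1+s)^ζ * Real.exp ((s-1)*τ))
        atTop (nhds (2^ζ * Real.Gamma (ξ+1))) := by
      convert hw using 4
      rw [show ξ + 1 - 1 = ξ by ring]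
    exact hw'.comp htt
  -- error part
  have hO := hf.littleO ξ ζ hξ hζ
  have hE0 : Tendsto (fun x => (∫ s in (-1:ℝ)..1, (1 - s) ^ ξ * (1 + s) ^ ζ *
      |f (x * s) / f x - Real.exp ((s - 1) * t x)|) / (t x) ^ (-(ξ + 1)))
      atTop (nhds 0) := hO.tendsto_div_nhds_zero
  have hE : Tendsto (fun n => (t (κ n))^(ξ+1) * ∫ s in (-1:ℝ)..1, (1 - s) ^ ξ * (1 + s) ^ ζ *
      |f (κ n * s) / f (κ n) - Real.exp ((s - 1) * t (κ n))|) atTop (nhds 0) := by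
    have := (hE0.comp hκtop)
    apply this.congr'
    have hev : ∀ᶠ n in atTop, 0 < t (κ n) := htt.eventually (eventually_gt_atTop 0)
    filter_upwards [hev] with n htn
    simp only [Function.comp]
    rw [Real.rpow_neg htn.le, div_eq_mul_inv, inv_inv]
    ring
  -- combine
  set K : ℕ → ℝ := fun n => ∫ s in (-1:ℝ)..1, (1-s)^ξ * (1+s)^ζ * (f (κ n * s) / f (κ n))
    with hKdef
  set B : ℕ → ℝ := fun n => ∫ s in (-1:ℝ)..1, (1-s)^ξ * (1+s)^ζ * Real.exp ((s-1) * t (κ n))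
    with hBdef
  have hZero : Tendsto (fun n => (t (κ n))^(ξ+1) * (K n - B n)) atTop (nhds 0) := by
    apply squeeze_zero_norm' _ hE
    have hev : ∀ᶠ n in atTop, 0 ≤ t (κ n) := htt.eventually (eventually_ge_atTop 0)
    filter_upwards [hev] with n htn
    have hκn := (hκpos n).le
    have hKint : IntervalIntegrable
        (fun s => (1-s)^ξ * (1+s)^ζ * (f (κ n * s) / f (κ n))) volume (-1) 1 := by
      apply weighted_intInt hξ hζ
      · exact (hmeas.comp (measurable_const_mul (κ n))).div_const _
      · exact ratio_le_one f hf hκn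
    have hBint : IntervalIntegrable
        (fun s => (1-s)^ξ * (1+s)^ζ * Real.exp ((s-1) * t (κ n))) volume (-1) 1 := by
      apply weighted_intInt hξ hζ (by fun_prop) (C := 1)
      intro s hs
      rw [abs_of_pos (Real.exp_pos _), Real.exp_le_one_iff]
      exact mul_nonpos_of_nonpos_of_nonneg (by linarith [hs.2]) htn
    have herrint : IntervalIntegrable
        (fun s => (1-s)^ξ * (1+s)^ζ *
          |f (κ n * s) / f (κ n) - Real.exp ((s-1) * t (κ n))|) volume (-1) 1 := by
      apply weighted_intInt hξ hζ (C := 2)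
      · apply Measurable.abs
        exact ((hmeas.comp (measurable_const_mul (κ n))).div_const _).sub (by fun_prop)
      · intro s hs
        rw [abs_abs]
        have h1 := ratio_le_one f hf hκn s hs
        have h2 : Real.exp ((s-1) * t (κ n)) ≤ 1 := by
          rw [Real.exp_le_one_iff]
          exact mul_nonpos_of_nonpos_of_nonneg (by linarith [hs.2]) htn
        have h3 : (0:ℝ) < Real.exp ((s-1) * t (κ n)) := Real.exp_pos _
        rw [abs_le] at h1 ⊢
        constructor <;> [linarith [h1.1]; linarith [h1.2]]
    have hsub : K n - B n = ∫ s in (-1:ℝ)..1,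
        (1-s)^ξ * (1+s)^ζ * (f (κ n * s) / f (κ n) - Real.exp ((s-1) * t (κ n))) := by
      rw [hKdef, hBdef]
      simp only []
      rw [← intervalIntegral.integral_sub hKint hBint]
      congr 1; funext s; ring
    have hbd : ‖K n - B n‖ ≤ ∫ s in (-1:ℝ)..1, (1-s)^ξ * (1+s)^ζ *
        |f (κ n * s) / f (κ n) - Real.exp ((s-1) * t (κ n))| := by
      rw [hsub]
      have := intervalIntegral.norm_integral_le_abs_of_norm_le (μ := volume)
        (f := fun s => (1-s)^ξ * (1+s)^ζ *
          (f (κ n * s) / f (κ n) - Real.exp ((s-1) * t (κ n))))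
        (g := fun s => (1-s)^ξ * (1+s)^ζ *
          |f (κ n * s) / f (κ n) - Real.exp ((s-1) * t (κ n))|)
        (a := -1) (b := 1) ?_ herrint
      · refine this.trans (le_of_eq (abs_of_nonneg ?_))
        apply intervalIntegral.integral_nonneg (by norm_num)
        intro s hs
        have h1 : (0:ℝ) ≤ (1-s)^ξ := Real.rpow_nonneg (by linarith [hs.2]) ξ
        have h2 : (0:ℝ) ≤ (1+s)^ζ := Real.rpow_nonneg (by linarith [hs.1]) ζ
        positivity
      · rw [MeasureTheory.ae_restrict_iff' measurableSet_uIoc]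
        filter_upwards with s hs
        rw [Set.uIoc_of_le (by norm_num : (-1:ℝ) ≤ 1)] at hs
        have h1 : (0:ℝ) ≤ (1-s)^ξ := Real.rpow_nonneg (by linarith [hs.2]) ξ
        have h2 : (0:ℝ) ≤ (1+s)^ζ := Real.rpow_nonneg (by linarith [hs.1.le]) ζ
        rw [Real.norm_eq_abs, abs_mul, abs_of_nonneg (mul_nonneg h1 h2)]
    have htp : (0:ℝ) ≤ (t (κ n))^(ξ+1) := Real.rpow_nonneg htn _
    rw [norm_mul, Real.norm_eq_abs (t (κ n) ^ (ξ+1)), abs_of_nonneg htp]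
    exact mul_le_mul_of_nonneg_left hbd htp
  have := hB.add hZero
  rw [add_zero] at this
  apply this.congr
  intro n
  simp only [hKdef, hBdef]
  ring

/-- Lemma A.4(ii): `(κ_n φ_f(κ_n))^{p+1} · ẽ₂(κ_n) · f(κ_n)⁻² · (∫_{-1}^1 (1-s²)^{(p-3)/2} f(κ_n s) ds)²
tends to `2^{p-4} (p-1) Γ((p-1)/2)²`. -/
theorem eTilde2_unnormalized_expansion
    (p : ℕ) (hp : 2 ≤ p) (f : ℝ → ℝ) (hf : MemF f)
    (κ : ℕ → ℝ) (hκpos : ∀ n, 0 < κ n) (hκtop : Tendsto κ atTop atTop) :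
    Tendsto (fun n => (κ n * phiF f (κ n)) ^ (p + 1) * eTilde2 p f (κ n) *
        (f (κ n)) ^ (-2 : ℤ) * (I0 p f (κ n)) ^ 2)
      atTop (nhds ((2:ℝ) ^ ((p:ℝ) - 4) * ((p:ℝ) - 1) * (Real.Gamma (((p:ℝ) - 1) / 2)) ^ 2)) := by
  have hp2 : (2:ℝ) ≤ (p:ℝ) := by exact_mod_cast hp
  set c : ℝ := ((p:ℝ) - 3) / 2 with hcdef
  have hc : -1 < c := by rw [hcdef]; linarith
  have hc1 : -1 < c + 1 := by linarith
  have hc2 : -1 < c + 2 := by linarith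
  have hp' : (p:ℝ) = 2*c + 3 := by rw [hcdef]; ring
  have hmeas := measurable_of_mono f hf.monoNonpos hf.strictMonoNonneg
  have htt : Tendsto (fun n => κ n * phiF f (κ n)) atTop atTop := hf.tendsto_top.comp hκtop
  have hK0 := K_tendsto f hf hc hc κ hκpos hκtop
  have hK1 := K_tendsto f hf hc1 hc κ hκpos hκtop
  have hK2 := K_tendsto f hf hc2 hc κ hκpos hκtop
  have hprod := (hK2.mul hK0).sub (hK1.pow 2)
  -- identify the limit value
  have hval : (2^c * Real.Gamma (c+2+1)) * (2^c * Real.Gamma (c+1))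
      - (2^c * Real.Gamma (c+1+1))^2
      = (2:ℝ) ^ ((p:ℝ) - 4) * ((p:ℝ) - 1) * (Real.Gamma (((p:ℝ) - 1) / 2)) ^ 2 := by
    have e2 : c + 2 + 1 = (c+2) + 1 := by ring
    have e3 : c + 2 = (c+1) + 1 := by ring
    rw [e2, Real.Gamma_add_one (by linarith : c + 2 ≠ 0),
        e3, Real.Gamma_add_one (by linarith : c + 1 ≠ 0)]
    have harg : ((p:ℝ) - 1)/2 = c + 1 := by rw [hcdef]; ring
    have hexp : (p:ℝ) - 4 = 2*c - 1 := by rw [hp']; ring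
    have hpm1 : (p:ℝ) - 1 = 2*c + 2 := by rw [hp']; ring
    rw [harg, hexp, hpm1]
    have h2c : (2:ℝ)^c * (2:ℝ)^c = 2 * 2^(2*c - 1) := by
      rw [← Real.rpow_add two_pos]
      rw [show c + c = 1 + (2*c - 1) by ring, Real.rpow_add two_pos, Real.rpow_one]
    linear_combination (c+1) * Real.Gamma (c+1)^2 * h2c
  rw [← hval]
  apply hprod.congr'
  filter_upwards [htt.eventually (eventually_gt_atTop 0)] with n htn
  set T : ℝ := κ n * phiF f (κ n) with hTdef
  have hκn : (0:ℝ) < κ n := hκpos n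
  have hF : (0:ℝ) < f (κ n) := hf.pos (κ n)
  -- the J integrals
  set J0 : ℝ := ∫ s in (-1:ℝ)..1, (1-s)^c * (1+s)^c * (f (κ n * s) / f (κ n)) with hJ0def
  set J1 : ℝ := ∫ s in (-1:ℝ)..1, (1-s)^c * (1+s)^c * (s * (f (κ n * s) / f (κ n)))
    with hJ1def
  set J2 : ℝ := ∫ s in (-1:ℝ)..1, (1-s)^c * (1+s)^c * (s^2 * (f (κ n * s) / f (κ n)))
    with hJ2def
  have hJint0 : IntervalIntegrable
      (fun s => (1-s)^c * (1+s)^c * (f (κ n * s) / f (κ n))) volume (-1) 1 :=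
    weighted_intInt hc hc ((hmeas.comp (measurable_const_mul (κ n))).div_const _)
      (ratio_le_one f hf hκn.le)
  have hJint1 : IntervalIntegrable
      (fun s => (1-s)^c * (1+s)^c * (s * (f (κ n * s) / f (κ n)))) volume (-1) 1 := by
    apply weighted_intInt hc hc (by fun_prop) (C := 1)
    intro s hs
    rw [abs_mul]
    calc |s| * |f (κ n * s) / f (κ n)| ≤ 1 * 1 :=
          mul_le_mul (abs_le.mpr ⟨hs.1, hs.2⟩) (ratio_le_one f hf hκn.le s hs)
            (abs_nonneg _) one_pos.le
      _ = 1 := by norm_num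
  have hJint2 : IntervalIntegrable
      (fun s => (1-s)^c * (1+s)^c * (s^2 * (f (κ n * s) / f (κ n)))) volume (-1) 1 := by
    apply weighted_intInt hc hc (by fun_prop) (C := 1)
    intro s hs
    rw [abs_mul]
    calc |s^2| * |f (κ n * s) / f (κ n)| ≤ 1 * 1 := by
          apply mul_le_mul _ (ratio_le_one f hf hκn.le s hs) (abs_nonneg _) one_pos.le
          rw [abs_pow]
          exact pow_le_one₀ (abs_nonneg s) (abs_le.mpr ⟨hs.1, hs.2⟩)
      _ = 1 := by norm_num
  -- K in terms of J
  have hK1eq : (∫ s in (-1:ℝ)..1, (1-s)^(c+1) * (1+s)^c * (f (κ n * s) / f (κ n)))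
      = J0 - J1 := by
    have heq : (∫ s in (-1:ℝ)..1, (1-s)^(c+1) * (1+s)^c * (f (κ n * s) / f (κ n)))
        = ∫ s in (-1:ℝ)..1,
        ((1-s)^c * (1+s)^c * (f (κ n * s) / f (κ n))
          - (1-s)^c * (1+s)^c * (s * (f (κ n * s) / f (κ n)))) := by
      apply intervalIntegral.integral_congr
      intro s hs
      beta_reduce
      rw [Set.uIcc_of_le (by norm_num : (-1:ℝ) ≤ 1)] at hs
      have h1s : (0:ℝ) ≤ 1 - s := by linarith [hs.2]
      rw [Real.rpow_add' h1s (by linarith : c + 1 ≠ 0), Real.rpow_one]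
      ring
    rw [heq, intervalIntegral.integral_sub hJint0 hJint1]
  have hK2eq : (∫ s in (-1:ℝ)..1, (1-s)^(c+2) * (1+s)^c * (f (κ n * s) / f (κ n)))
      = J0 - 2*J1 + J2 := by
    have heq : (∫ s in (-1:ℝ)..1, (1-s)^(c+2) * (1+s)^c * (f (κ n * s) / f (κ n)))
        = ∫ s in (-1:ℝ)..1,
        (((1-s)^c * (1+s)^c * (f (κ n * s) / f (κ n))
            - 2 * ((1-s)^c * (1+s)^c * (s * (f (κ n * s) / f (κ n)))))
          + (1-s)^c * (1+s)^c * (s^2 * (f (κ n * s) / f (κ n)))) := by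
      apply intervalIntegral.integral_congr
      intro s hs
      beta_reduce
      rw [Set.uIcc_of_le (by norm_num : (-1:ℝ) ≤ 1)] at hs
      have h1s : (0:ℝ) ≤ 1 - s := by linarith [hs.2]
      rw [Real.rpow_add' h1s (by linarith : c + 2 ≠ 0),
        show ((2:ℝ) = ((2:ℕ):ℝ)) by norm_num, Real.rpow_natCast]
      ring
    rw [heq, intervalIntegral.integral_add (hJint0.sub (hJint1.const_mul 2)) hJint2,
      intervalIntegral.integral_sub hJint0 (hJint1.const_mul 2),
      intervalIntegral.integral_const_mul]
  -- I0 facts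
  have hfb : ∀ s ∈ Set.Icc (-1:ℝ) 1, |f (κ n * s)| ≤ f (κ n) := by
    intro s hs
    rw [abs_of_pos (hf.pos _)]
    exact f_le f hf hκn.le s hs
  have hI0int' : IntervalIntegrable (fun s => (1-s)^c * (1+s)^c * f (κ n * s)) volume (-1) 1 :=
    weighted_intInt hc hc (hmeas.comp (measurable_const_mul (κ n))) hfb
  have hsqeq : ∀ s ∈ Set.uIcc (-1:ℝ) 1, ∀ y : ℝ,
      (1 - s^2)^c * y = (1-s)^c * (1+s)^c * y := by
    intro s hs y
    rw [Set.uIcc_of_le (by norm_num : (-1:ℝ) ≤ 1)] at hs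
    rw [show (1 - s^2 : ℝ) = (1-s)*(1+s) by ring,
      Real.mul_rpow (by linarith [hs.2]) (by linarith [hs.1])]
  have hI0int : IntervalIntegrable (fun s => (1 - s^2)^c * f (κ n * s)) volume (-1) 1 := by
    apply hI0int'.congr
    intro s hs
    exact (hsqeq s (Set.uIoc_subset_uIcc hs) _).symm
  have hI0eq : I0 p f (κ n) = ∫ s in (-1:ℝ)..1, (1 - s^2)^c * f (κ n * s) := by
    rw [I0, ← hcdef]
  have hI0pos : 0 < I0 p f (κ n) := by
    rw [hI0eq]
    apply intervalIntegral.intervalIntegral_pos_of_pos_on hI0int _ (by norm_num)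
    intro s hs
    have h1 : (0:ℝ) < 1 - s^2 := by nlinarith [hs.1, hs.2]
    exact mul_pos (Real.rpow_pos_of_pos h1 c) (hf.pos _)
  -- moments over f κ
  have hmom : ∀ ℓ : ℕ, (∫ s in (-1:ℝ)..1, s ^ ℓ * (1 - s^2)^c * f (κ n * s))
      = (∫ s in (-1:ℝ)..1, (1-s)^c * (1+s)^c * (s^ℓ * (f (κ n * s) / f (κ n)))) * f (κ n) := by
    intro ℓ
    rw [eq_comm, mul_comm, ← intervalIntegral.integral_const_mul]
    apply intervalIntegral.integral_congr
    intro s hs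
    beta_reduce
    rw [← hsqeq s hs]
    field_simp
  have hI0J : I0 p f (κ n) = J0 * f (κ n) := by
    rw [hI0eq, hJ0def]
    have h0 := hmom 0
    simp only [pow_zero, one_mul] at h0
    exact h0
  have hJ0pos : 0 < J0 := by
    have hj : J0 = I0 p f (κ n) / f (κ n) := by
      rw [hI0J]; field_simp
    rw [hj]
    exact div_pos hI0pos hF
  have hFne : f (κ n) ≠ 0 := hF.ne'
  have hJ0ne : J0 ≠ 0 := hJ0pos.ne'
  -- moments as J over J0
  have hM1 : eMom p f 1 (κ n) = J1 / J0 := by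
    have h : eMom p f 1 (κ n) = (∫ s in (-1:ℝ)..1, s^1 * (1-s^2)^(((p:ℝ)-3)/2)
        * f (κ n * s)) / I0 p f (κ n) := rfl
    rw [h, ← hcdef, hmom 1, hI0J]
    have h1 : (∫ s in (-1:ℝ)..1, (1-s)^c * (1+s)^c * (s^1 * (f (κ n * s) / f (κ n)))) = J1 := by
      rw [hJ1def]
      simp only [pow_one]
    rw [h1, mul_div_mul_right _ _ hFne]
  have hM2 : eMom p f 2 (κ n) = J2 / J0 := by
    have h : eMom p f 2 (κ n) = (∫ s in (-1:ℝ)..1, s^2 * (1-s^2)^(((p:ℝ)-3)/2)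
        * f (κ n * s)) / I0 p f (κ n) := rfl
    rw [h, ← hcdef, hmom 2, hI0J, ← hJ2def, mul_div_mul_right _ _ hFne]
  have hFz : f (κ n)^(-2:ℤ) = (f (κ n)^(2:ℕ))⁻¹ := by
    rw [zpow_neg]
    norm_cast
  have heT : eTilde2 p f (κ n) * f (κ n)^(-2:ℤ) * I0 p f (κ n)^2 = J2*J0 - J1^2 := by
    have h : eTilde2 p f (κ n) = eMom p f 2 (κ n) - (eMom p f 1 (κ n))^2 := rfl
    rw [h, hM1, hM2, hFz, hI0J]
    field_simp
  -- rpow arithmetic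
  have hTp : T^(p+1) = T^((p:ℝ)+1) := by
    have h := Real.rpow_natCast T (p+1)
    push_cast at h
    exact h.symm
  have h1 : T^(c+2+1) * T^(c+1) = T^((p:ℝ)+1) := by
    rw [← Real.rpow_add htn, show (c+2+1)+(c+1) = (p:ℝ)+1 by rw [hp']; ring]
  have h2 : T^(c+1+1) * T^(c+1+1) = T^((p:ℝ)+1) := by
    rw [← Real.rpow_add htn, show (c+1+1)+(c+1+1) = (p:ℝ)+1 by rw [hp']; ring]
  have hRHS : T^(p+1) * eTilde2 p f (κ n) * f (κ n)^(-2:ℤ) * I0 p f (κ n)^2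
      = T^((p:ℝ)+1) * (J2*J0 - J1^2) := by
    calc T^(p+1) * eTilde2 p f (κ n) * f (κ n)^(-2:ℤ) * I0 p f (κ n)^2
        = T^((p:ℝ)+1) * (eTilde2 p f (κ n) * f (κ n)^(-2:ℤ) * I0 p f (κ n)^2) := by
          rw [hTp]; ring
      _ = T^((p:ℝ)+1) * (J2*J0 - J1^2) := by rw [heT]
  rw [hK2eq, hK1eq, hRHS]
  linear_combination ((J0 - 2*J1 + J2)*J0) * h1 - ((J0 - J1)^2) * h2
end

section
/- For any real numbers ξ, ζ > −1, ∫_0^{2c} z^ξ (2 − z/c)^ζ e^{−z} dz → 2^ζ Γ(ξ+1) as c → ∞, where Γ is the Euler Gamma function. -/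
open MeasureTheory Filter Asymptotics Real Set intervalIntegral

private lemma base_bound (ζ : ℝ) {b : ℝ} (hb : 1 ≤ b) (hb2 : b ≤ 2) :
    b ^ ζ ≤ max 1 (2 ^ ζ) := by
  rcases le_or_gt 0 ζ with h | h
  · exact le_max_of_le_right (Real.rpow_le_rpow (by linarith) hb2 h)
  · exact le_max_of_le_left (Real.rpow_le_one_of_one_le_of_nonpos hb h.le)

private lemma meas_F (ξ ζ c : ℝ) :
    Measurable (fun z : ℝ => z ^ ξ * (2 - z / c) ^ ζ * Real.exp (-z)) := by
  fun_prop

private lemma gamma_integrable (ξ : ℝ) (hξ : -1 < ξ) :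
    IntegrableOn (fun z : ℝ => Real.exp (-z) * z ^ ξ) (Set.Ioi 0) := by
  have h := Real.GammaIntegral_convergent (s := ξ + 1) (by linarith)
  simpa using h

private lemma rpow_integrable (ζ c : ℝ) (hζ : -1 < ζ) (hc : 0 < c) :
    IntegrableOn (fun z => (2 - z / c) ^ ζ) (Set.Ioc c (2*c)) := by
  have h1 : IntervalIntegrable (fun x : ℝ => x ^ ζ) volume 0 1 :=
    intervalIntegral.intervalIntegrable_rpow' hζ
  have h2 := (h1.comp_sub_left 2 enorm_ne_top).comp_mul_right (c := c⁻¹) enorm_ne_top enorm_ne_top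
  simp only [← div_eq_mul_inv, div_inv_eq_mul] at h2
  norm_num at h2
  have h3 := h2.symm
  rw [intervalIntegrable_iff_integrableOn_Ioc_of_le (by linarith)] at h3
  convert h3 using 2 <;> ring_nf

private lemma rpow_integral (ζ c : ℝ) (hζ : -1 < ζ) (hc : 0 < c) :
    ∫ z in Set.Ioc c (2*c), (2 - z / c) ^ ζ = c * (1/(ζ+1)) := by
  rw [← intervalIntegral.integral_of_le (by linarith)]
  rw [intervalIntegral.integral_comp_div (f := fun u => (2 - u) ^ ζ) hc.ne']
  rw [intervalIntegral.integral_comp_sub_left (fun u => u ^ ζ) 2]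
  rw [div_self hc.ne', mul_div_assoc, div_self hc.ne', mul_one,
    show (2:ℝ)-2 = 0 by norm_num, show (2:ℝ)-1 = 1 by norm_num,
    integral_rpow (Or.inl hζ), Real.one_rpow,
    Real.zero_rpow (by linarith), smul_eq_mul]
  ring

private lemma int_left (ξ ζ c : ℝ) (hξ : -1 < ξ) (hc : 0 < c) :
    IntegrableOn (fun z : ℝ => z ^ ξ * (2 - z / c) ^ ζ * Real.exp (-z)) (Set.Ioc 0 c) := by
  apply Integrable.mono'
    (g := fun z : ℝ => max 1 (2 ^ ζ) * (Real.exp (-z) * z ^ ξ))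
  · exact (((gamma_integrable ξ hξ).mono_set Ioc_subset_Ioi_self).const_mul _)
  · exact ((meas_F ξ ζ c).aestronglyMeasurable).restrict
  · rw [ae_restrict_iff' measurableSet_Ioc]
    filter_upwards with z hz
    obtain ⟨hz0, hzc⟩ := hz
    have hb1 : 1 ≤ 2 - z / c := by
      have : z / c ≤ 1 := (div_le_one hc).2 hzc
      linarith
    have hb2 : 2 - z / c ≤ 2 := by
      have : 0 < z / c := div_pos hz0 hc
      linarith
    have h1 : 0 ≤ z ^ ξ := Real.rpow_nonneg hz0.le _
    have h2 : 0 ≤ (2 - z / c) ^ ζ := Real.rpow_nonneg (by linarith) _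
    rw [Real.norm_eq_abs, abs_of_nonneg (by positivity)]
    calc z ^ ξ * (2 - z / c) ^ ζ * Real.exp (-z)
        ≤ z ^ ξ * max 1 (2 ^ ζ) * Real.exp (-z) := by
          apply mul_le_mul_of_nonneg_right _ (Real.exp_nonneg _)
          exact mul_le_mul_of_nonneg_left (base_bound ζ hb1 hb2) h1
      _ = max 1 (2 ^ ζ) * (Real.exp (-z) * z ^ ξ) := by ring

private lemma pt_bound (ξ ζ c : ℝ) (hc : 0 < c) {z : ℝ} (hz1 : c < z) (hz2 : z < 2*c) :
    z ^ ξ * (2 - z / c) ^ ζ * Real.exp (-z)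
      ≤ (max (c ^ ξ) ((2*c) ^ ξ) * Real.exp (-c)) * (2 - z / c) ^ ζ := by
  have hz0 : 0 < z := lt_trans hc hz1
  have hb0 : 0 ≤ 2 - z / c := by
    have : z / c < 2 := (div_lt_iff₀ hc).2 (by linarith)
    linarith
  have h2 : 0 ≤ (2 - z / c) ^ ζ := Real.rpow_nonneg hb0 _
  have hZ : z ^ ξ ≤ max (c ^ ξ) ((2*c) ^ ξ) := by
    rcases le_or_gt 0 ξ with h | h
    · exact le_max_of_le_right (Real.rpow_le_rpow hz0.le hz2.le h)
    · exact le_max_of_le_left (Real.rpow_le_rpow_of_nonpos hc hz1.le h.le)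
  have hM0 : 0 ≤ max (c ^ ξ) ((2*c) ^ ξ) := le_max_of_le_left (Real.rpow_nonneg hc.le _)
  calc z ^ ξ * (2 - z / c) ^ ζ * Real.exp (-z)
      ≤ max (c ^ ξ) ((2*c) ^ ξ) * (2 - z / c) ^ ζ * Real.exp (-z) :=
        mul_le_mul_of_nonneg_right (mul_le_mul_of_nonneg_right hZ h2) (Real.exp_nonneg _)
    _ ≤ max (c ^ ξ) ((2*c) ^ ξ) * (2 - z / c) ^ ζ * Real.exp (-c) :=
        mul_le_mul_of_nonneg_left (Real.exp_le_exp.2 (by linarith)) (mul_nonneg hM0 h2)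
    _ = (max (c ^ ξ) ((2*c) ^ ξ) * Real.exp (-c)) * (2 - z / c) ^ ζ := by ring

private lemma int_right (ξ ζ c : ℝ) (hζ : -1 < ζ) (hc : 0 < c) :
    IntegrableOn (fun z : ℝ => z ^ ξ * (2 - z / c) ^ ζ * Real.exp (-z))
      (Set.Ioo c (2*c)) := by
  apply Integrable.mono'
    (g := fun z : ℝ => (max (c ^ ξ) ((2*c) ^ ξ) * Real.exp (-c)) * (2 - z / c) ^ ζ)
  · exact (((rpow_integrable ζ c hζ hc).mono_set Ioo_subset_Ioc_self).const_mul _)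
  · exact ((meas_F ξ ζ c).aestronglyMeasurable).restrict
  · rw [ae_restrict_iff' measurableSet_Ioo]
    filter_upwards with z hz
    obtain ⟨hz1, hz2⟩ := hz
    have hz0 : 0 < z := lt_trans hc hz1
    have hb0 : 0 ≤ 2 - z / c := by
      have : z / c < 2 := (div_lt_iff₀ hc).2 (by linarith)
      linarith
    rw [Real.norm_eq_abs, abs_of_nonneg (by positivity)]
    exact pt_bound ξ ζ c hc hz1 hz2

/-- Lemma A.2: for `ξ, ζ > -1`, `∫_0^{2c} z^ξ (2 - z/c)^ζ e^{-z} dz → 2^ζ Γ(ξ+1)` as `c → ∞`. -/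
theorem integral_tendsto_two_pow_mul_Gamma (ξ ζ : ℝ) (hξ : -1 < ξ) (hζ : -1 < ζ) :
    Tendsto (fun c : ℝ =>
        ∫ z in Set.Ioo (0:ℝ) (2 * c), z ^ ξ * (2 - z / c) ^ ζ * Real.exp (-z))
      atTop (nhds ((2:ℝ) ^ ζ * Real.Gamma (ξ + 1))) := by
  set f : ℝ → ℝ → ℝ := fun c z => z ^ ξ * (2 - z / c) ^ ζ * Real.exp (-z) with hf
  -- Part 1 : integral over (0, c] tends to the limit
  have part1 : Tendsto (fun c => ∫ z in Set.Ioc (0:ℝ) c, f c z) atTop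
      (nhds ((2:ℝ) ^ ζ * Real.Gamma (ξ + 1))) := by
    have hrepr : ∀ c : ℝ, (∫ z in Set.Ioc (0:ℝ) c, f c z)
        = ∫ z in Set.Ioi (0:ℝ), Set.indicator (Set.Ioc 0 c) (f c) z := by
      intro c
      rw [setIntegral_indicator measurableSet_Ioc,
        Set.inter_eq_self_of_subset_right Ioc_subset_Ioi_self]
    simp only [hrepr]
    have key := tendsto_integral_filter_of_dominated_convergence
      (μ := volume.restrict (Set.Ioi 0)) (l := atTop)
      (F := fun c z => Set.indicator (Set.Ioc 0 c) (f c) z)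
      (f := fun z : ℝ => (2:ℝ) ^ ζ * (Real.exp (-z) * z ^ ξ))
      (bound := fun z : ℝ => max 1 ((2:ℝ) ^ ζ) * (Real.exp (-z) * z ^ ξ))
      (Eventually.of_forall fun c =>
        (((meas_F ξ ζ c).indicator measurableSet_Ioc).aestronglyMeasurable))
      ?_ (((gamma_integrable ξ hξ).const_mul _)) ?_
    · have hval : (∫ z in Set.Ioi (0:ℝ), (2:ℝ) ^ ζ * (Real.exp (-z) * z ^ ξ))
          = (2:ℝ) ^ ζ * Real.Gamma (ξ + 1) := by
        rw [MeasureTheory.integral_const_mul, Real.Gamma_eq_integral (by linarith : (0:ℝ) < ξ + 1)]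
        norm_num
      rwa [hval] at key
    · -- bound
      filter_upwards [eventually_gt_atTop (0:ℝ)] with c hc
      rw [ae_restrict_iff' measurableSet_Ioi]
      filter_upwards with z hz
      by_cases hmem : z ∈ Set.Ioc (0:ℝ) c
      · rw [Set.indicator_of_mem hmem]
        obtain ⟨hz0, hzc⟩ := hmem
        have hb1 : 1 ≤ 2 - z / c := by
          have : z / c ≤ 1 := (div_le_one hc).2 hzc
          linarith
        have hb2 : 2 - z / c ≤ 2 := by
          have : 0 < z / c := div_pos hz0 hc
          linarith
        have h1 : 0 ≤ z ^ ξ := Real.rpow_nonneg hz0.le _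
        have h2 : 0 ≤ (2 - z / c) ^ ζ := Real.rpow_nonneg (by linarith) _
        rw [Real.norm_eq_abs, abs_of_nonneg (by positivity)]
        calc z ^ ξ * (2 - z / c) ^ ζ * Real.exp (-z)
            ≤ z ^ ξ * max 1 (2 ^ ζ) * Real.exp (-z) := by
              apply mul_le_mul_of_nonneg_right _ (Real.exp_nonneg _)
              exact mul_le_mul_of_nonneg_left (base_bound ζ hb1 hb2) h1
          _ = max 1 (2 ^ ζ) * (Real.exp (-z) * z ^ ξ) := by ring
      · rw [Set.indicator_of_notMem hmem, norm_zero]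
        have h1 : 0 ≤ z ^ ξ := Real.rpow_nonneg (le_of_lt hz) _
        have h0 : (0:ℝ) ≤ max 1 ((2:ℝ) ^ ζ) := le_max_of_le_left zero_le_one
        positivity
    · -- pointwise limit
      rw [ae_restrict_iff' measurableSet_Ioi]
      filter_upwards with z hz
      have heq : (fun c : ℝ => f c z) =ᶠ[atTop]
          (fun c : ℝ => Set.indicator (Set.Ioc (0:ℝ) c) (f c) z) := by
        filter_upwards [eventually_ge_atTop z] with c hcz
        rw [Set.indicator_of_mem (Set.mem_Ioc.mpr ⟨hz, hcz⟩)]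
      apply Tendsto.congr' heq
      have h1 : Tendsto (fun c : ℝ => z / c) atTop (nhds 0) :=
        tendsto_const_nhds.div_atTop tendsto_id
      have h2 : Tendsto (fun c : ℝ => (2 - z / c) ^ ζ) atTop (nhds ((2:ℝ) ^ ζ)) := by
        have h3 := ((tendsto_const_nhds (x := (2:ℝ))).sub h1).rpow_const
          (p := ζ) (Or.inl (by norm_num : (2:ℝ) - 0 ≠ 0))
        simpa using h3
      have h4 := (h2.const_mul (z ^ ξ)).mul_const (Real.exp (-z))
      have heqlim : (2:ℝ) ^ ζ * (Real.exp (-z) * z ^ ξ)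
          = z ^ ξ * 2 ^ ζ * Real.exp (-z) := by ring
      rw [heqlim]
      exact h4
  -- Part 2 : integral over (c, 2c) tends to 0
  have part2 : Tendsto (fun c => ∫ z in Set.Ioo c (2*c), f c z) atTop (nhds 0) := by
    have hM : Tendsto (fun c : ℝ =>
        (max (c ^ ξ) ((2*c) ^ ξ) * Real.exp (-c)) * (c * (1/(ζ+1)))) atTop (nhds 0) := by
      have hK := (tendsto_rpow_mul_exp_neg_mul_atTop_nhds_zero (ξ+1) 1 one_pos).const_mul
        (max 1 ((2:ℝ) ^ ξ) * (1/(ζ+1)))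
      rw [mul_zero] at hK
      apply Tendsto.congr' _ hK
      filter_upwards [eventually_gt_atTop (0:ℝ)] with c hc
      have hmax : max (c ^ ξ) ((2*c) ^ ξ) = c ^ ξ * max 1 ((2:ℝ) ^ ξ) := by
        rw [Real.mul_rpow (by norm_num) hc.le,
          mul_max_of_nonneg _ _ (Real.rpow_nonneg hc.le ξ), mul_one,
          mul_comm (c ^ ξ) ((2:ℝ) ^ ξ)]
      rw [hmax, show (-1 : ℝ) * c = -c by ring, Real.rpow_add_one hc.ne']
      ring
    apply tendsto_of_tendsto_of_tendsto_of_le_of_le' tendsto_const_nhds hM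
    · filter_upwards [eventually_gt_atTop (0:ℝ)] with c hc
      apply setIntegral_nonneg measurableSet_Ioo
      intro z hzmem
      obtain ⟨hz1, hz2⟩ := hzmem
      have hz0 : 0 < z := lt_trans hc hz1
      have hb0 : 0 ≤ 2 - z / c := by
        have : z / c < 2 := (div_lt_iff₀ hc).2 (by linarith)
        linarith
      positivity
    · filter_upwards [eventually_gt_atTop (0:ℝ)] with c hc
      calc (∫ z in Set.Ioo c (2*c), f c z)
          ≤ ∫ z in Set.Ioo c (2*c),
              (max (c ^ ξ) ((2*c) ^ ξ) * Real.exp (-c)) * (2 - z / c) ^ ζ := by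
            apply setIntegral_mono_on (int_right ξ ζ c hζ hc)
              (((rpow_integrable ζ c hζ hc).mono_set Ioo_subset_Ioc_self).const_mul _)
              measurableSet_Ioo
            intro z hzmem
            exact pt_bound ξ ζ c hc hzmem.1 hzmem.2
        _ = (max (c ^ ξ) ((2*c) ^ ξ) * Real.exp (-c)) * (c * (1/(ζ+1))) := by
            rw [MeasureTheory.integral_const_mul, ← integral_Ioc_eq_integral_Ioo,
              rpow_integral ζ c hζ hc]
  -- Combine
  have final := part1.add part2
  rw [add_zero] at final
  apply Tendsto.congr' _ final
  filter_upwards [eventually_gt_atTop (0:ℝ)] with c hc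
  have hdisj : Disjoint (Set.Ioc (0:ℝ) c) (Set.Ioo c (2*c)) := by
    rw [Set.disjoint_left]
    rintro z ⟨_, h1⟩ ⟨h2, _⟩
    exact absurd h1 (not_le.2 h2)
  rw [← setIntegral_union hdisj measurableSet_Ioo (int_left ξ ζ c hξ hc)
    (int_right ξ ζ c hζ hc), Set.Ioc_union_Ioo_eq_Ioo hc.le (by linarith)]
end

section
/- For every real number b ≥ 1 there exists c ∈ (0,1) such that 0 ≤ (1−r)^b − 1 + br ≤ c·b·r for every r ∈ [0,2], where z^b denotes sgn(z)|z|^b for z ∈ ℝ. -/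
open Real Set

/-- Signed power `z^b := sgn(z)|z|^b`. -/
noncomputable def spow (z b : ℝ) : ℝ := Real.sign z * |z| ^ b

/-!
On `[-1, 1]` the odd power `x ↦ spow x b` (`b ≥ 1`) lies above its tangent line `1 + b (x - 1)`
at `x = 1` (Bernoulli's inequality for `x ≥ 0`, and `spow x b ≥ x` for `x < 0`) and below the line
`(1 + x) / 2` (since `x ^ b ≤ x` on `[0, 1]` and `spow x b ≤ 0` for `x < 0`). With `x = 1 - r`
and `c = 1 - 1 / (2b)`, so that `c b r = b r - r / 2`, these are exactly the two inequalities.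
-/

section

variable {x b : ℝ}

theorem spow_of_nonneg (hb : b ≠ 0) (hx : 0 ≤ x) : spow x b = x ^ b := by
  rcases hx.eq_or_lt with rfl | hx
  · simp [spow, zero_rpow hb]
  · rw [spow, Real.sign_of_pos hx, abs_of_pos hx, one_mul]

theorem spow_neg (x b : ℝ) : spow (-x) b = -spow x b := by
  rw [spow, spow, Real.sign_neg, abs_neg, neg_mul]

theorem spow_of_nonpos (hb : b ≠ 0) (hx : x ≤ 0) : spow x b = -(-x) ^ b := by
  rw [← spow_of_nonneg hb (neg_nonneg.mpr hx), spow_neg, neg_neg]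

theorem one_add_mul_sub_one_le_spow (hb : 1 ≤ b) (hx : -1 ≤ x) :
    1 + b * (x - 1) ≤ spow x b := by
  have hb0 : b ≠ 0 := by positivity
  rcases le_total 0 x with hx0 | hx0
  · rw [spow_of_nonneg hb0 hx0]
    simpa using one_add_mul_self_le_rpow_one_add (s := x - 1) (by linarith) hb
  · rw [spow_of_nonpos hb0 hx0]
    have : (-x) ^ b ≤ -x := rpow_le_self_of_le_one (by linarith) (by linarith) hb
    nlinarith

theorem spow_le_one_add_div_two (hb : 1 ≤ b) (hx : -1 ≤ x) (hx1 : x ≤ 1) :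
    spow x b ≤ (1 + x) / 2 := by
  have hb0 : b ≠ 0 := by positivity
  rcases le_total 0 x with hx0 | hx0
  · rw [spow_of_nonneg hb0 hx0]
    have : x ^ b ≤ x := rpow_le_self_of_le_one hx0 hx1 hb
    linarith
  · rw [spow_of_nonpos hb0 hx0]
    have : 0 ≤ (-x) ^ b := rpow_nonneg (by linarith) b
    linarith

end

/-- Lemma A.3(ii): for every `b ≥ 1` there exists `c ∈ (0,1)` such that
`0 ≤ (1-r)^b - 1 + b r ≤ c b r` for every `r ∈ [0,2]`. -/
theorem exists_c_bound (b : ℝ) (hb : 1 ≤ b) :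
    ∃ c : ℝ, 0 < c ∧ c < 1 ∧ ∀ r ∈ Set.Icc (0:ℝ) 2,
      0 ≤ spow (1 - r) b - 1 + b * r ∧ spow (1 - r) b - 1 + b * r ≤ c * b * r := by
  have hb0 : 0 < b := by linarith
  refine ⟨1 - 1 / (2 * b), ?_, ?_, ?_⟩
  · have : 1 / (2 * b) ≤ 1 / 2 := by gcongr; linarith
    linarith
  · have : 0 < 1 / (2 * b) := by positivity
    linarith
  · rintro r ⟨hr0, hr2⟩
    have hc : (1 - 1 / (2 * b)) * b * r = b * r - r / 2 := by field_simp
    have lower := one_add_mul_sub_one_le_spow (x := 1 - r) hb (by linarith)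
    have upper := spow_le_one_add_div_two (x := 1 - r) hb (by linarith) (by linarith)
    constructor <;> linarith
end
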